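/- arXiv:1609.00962 — 2 statements merged into one kernel-verified Lean document; each statement's English description precedes it below -/
import Mathlib

section
/- The eigenvalues of the adjacency matrix of the path graph with m vertices (Dynkin diagram of type A_m) are exactly 2·cos(kπ/(m+1)) for k = 1, …, m. -/
/-!
The vector `j ↦ sin (jθ)`, `j = 1, …, m`, is an eigenvector of the path adjacency matrix with
eigenvalue `2 cos θ` whenever `sin ((m + 1)θ) = 0`, by `sin ((j-1)θ) + sin ((j+1)θ) =
2 cos θ sin (jθ)`. Taking `θ = kπ/(m+1)` for `k = 1, …, m` gives `m` distinct eigenvalues,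
since `cos` is injective on `[0, π]`. Eigenvectors for distinct eigenvalues are linearly
independent, so an `m × m` matrix has no further eigenvalue.
-/

/-- The adjacency matrix of the path graph (type `A_m` Dynkin diagram) on `m`
vertices. -/
noncomputable def pathAdj (m : ℕ) : Matrix (Fin m) (Fin m) ℝ :=
  fun i j => if i.val + 1 = j.val ∨ j.val + 1 = i.val then 1 else 0

open Module End Matrix Real

theorem Matrix.hasEigenvalue_toLin'_iff {n R : Type*} [Fintype n] [DecidableEq n] [CommRing R]
    (A : Matrix n n R) (μ : R) :
    HasEigenvalue A.toLin' μ ↔ ∃ v, v ≠ 0 ∧ A *ᵥ v = μ • v := by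
  refine ⟨fun h => ?_, fun ⟨v, hv0, hv⟩ => hasEigenvalue_of_hasEigenvector ⟨?_, hv0⟩⟩
  · obtain ⟨v, hv, hv0⟩ := h.exists_hasEigenvector
    exact ⟨v, hv0, mem_eigenspace_iff.1 hv⟩
  · simpa [mem_eigenspace_iff] using hv

theorem Module.End.HasEigenvalue.mem_range_of_injective {K V : Type*} [Field K]
    [AddCommGroup V] [Module K V] [FiniteDimensional K V] {f : End K V} {n : ℕ}
    {μ : Fin n → K} (hμ : Function.Injective μ) (hμf : ∀ i, f.HasEigenvalue (μ i))
    (hn : finrank K V ≤ n) {a : K} (ha : f.HasEigenvalue a) : a ∈ Set.range μ := by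
  by_contra h
  let ν : Fin (n + 1) → K := Fin.cons a μ
  have hν : Function.Injective ν := Fin.cons_injective_iff.2 ⟨h, hμ⟩
  have hνf : ∀ i, f.HasEigenvalue (ν i) := Fin.forall_fin_succ.2 ⟨ha, hμf⟩
  choose v hv using fun i => (hνf i).exists_hasEigenvector
  have hcard := (f.eigenvectors_linearIndependent' ν hν v hv).fintype_card_le_finrank
  rw [Fintype.card_fin] at hcard
  omega

theorem pathAdj_mulVec_apply {m : ℕ} (w : ℕ → ℝ) (h0 : w 0 = 0) (hm : w (m + 1) = 0)
    (i : Fin m) : (pathAdj m *ᵥ fun j => w (j + 1)) i = w i + w (i + 2) := by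
  -- `w 0 = 0` lets the missing left neighbour of vertex `0` be read as the index `0 - 1 = 0`
  have hterm (n : ℕ) : (if i.val + 1 = n ∨ n + 1 = i.val then (1 : ℝ) else 0) * w (n + 1) =
      (if n = i.val - 1 then w i else 0) + (if n = i.val + 1 then w (i + 2) else 0) := by
    split_ifs <;> first
      | omega
      | (simp only [one_mul, add_zero, zero_add]; congr 1; omega)
      | simp [show i.val = 0 by omega, h0]
      | simp
  simp only [mulVec, dotProduct, pathAdj]
  rw [Fin.sum_univ_eq_sum_range (fun n =>
    (if i.val + 1 = n ∨ n + 1 = i.val then (1 : ℝ) else 0) * w (n + 1))]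
  simp only [hterm, Finset.sum_add_distrib, Finset.sum_ite_eq']
  rw [if_pos (Finset.mem_range.2 (by omega))]
  congr 1
  split_ifs with h
  · rfl
  · rw [show i.val + 2 = m + 1 by rw [Finset.mem_range] at h; omega, hm]

theorem pathAdj_mulVec_sin {m : ℕ} {θ : ℝ} (hθ : sin ((m + 1) * θ) = 0) :
    pathAdj m *ᵥ (fun j : Fin m => sin ((j + 1 : ℕ) * θ)) =
      (2 * cos θ) • fun j : Fin m => sin ((j + 1 : ℕ) * θ) := by
  funext i
  rw [pathAdj_mulVec_apply (fun n => sin (n * θ)) (by simp) (by exact_mod_cast hθ)]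
  have h := two_mul_sin_mul_cos ((i + 1 : ℕ) * θ) θ
  push_cast at h ⊢
  rw [Pi.smul_apply, smul_eq_mul, mul_assoc, mul_comm (cos θ), ← mul_assoc, h]
  ring_nf

theorem pathAdj_hasEigenvalue {m k : ℕ} (hk : 1 ≤ k) (hkm : k ≤ m) :
    HasEigenvalue (pathAdj m).toLin' (2 * cos (k * π / (m + 1))) := by
  have hθ : 0 < k * π / (m + 1) ∧ k * π / (m + 1) < π := by
    have hk' : (k : ℝ) < m + 1 := by exact_mod_cast Nat.lt_succ_of_le hkm
    refine ⟨by positivity, ?_⟩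
    rw [div_lt_iff₀ (by positivity)]
    nlinarith [pi_pos]
  refine (hasEigenvalue_toLin'_iff _ _).2 ⟨_, fun h => ?_, pathAdj_mulVec_sin ?_⟩
  · have h0 := congrFun h ⟨0, by omega⟩
    simp only [Nat.cast_one, zero_add, one_mul, Pi.zero_apply] at h0
    exact (sin_pos_of_pos_of_lt_pi hθ.1 hθ.2).ne' h0
  · rw [mul_div_cancel₀ _ (by positivity), sin_nat_mul_pi]

theorem injective_two_mul_cos_succ_mul_pi_div (m : ℕ) :
    Function.Injective fun k : Fin m => 2 * cos ((k + 1 : ℕ) * π / (m + 1)) := by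
  have hmem (k : Fin m) : ((k + 1 : ℕ) * π / (m + 1)) ∈ Set.Icc 0 π := by
    refine ⟨by positivity, ?_⟩
    rw [div_le_iff₀ (by positivity)]
    have : ((k + 1 : ℕ) : ℝ) ≤ m := by exact_mod_cast k.2
    nlinarith [pi_pos]
  intro k l hkl
  have := injOn_cos (hmem k) (hmem l) (by simpa using hkl)
  rw [div_left_inj' (by positivity), mul_left_inj' pi_ne_zero, Nat.cast_inj] at this
  exact Fin.ext (by omega)

/-- The eigenvalues of the adjacency matrix of the path graph on `m` vertices are
exactly `2 cos (kπ/(m+1))` for `k = 1, …, m`. -/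
theorem pathAdj_eigenvalues (m : ℕ) (α : ℝ) :
    (∃ v : Fin m → ℝ, v ≠ 0 ∧ (pathAdj m).mulVec v = α • v) ↔
      ∃ k : ℕ, 1 ≤ k ∧ k ≤ m ∧ α = 2 * Real.cos (k * Real.pi / (m + 1)) := by
  rw [← hasEigenvalue_toLin'_iff]
  constructor
  · intro hα
    obtain ⟨k, rfl⟩ := hα.mem_range_of_injective (injective_two_mul_cos_succ_mul_pi_div m)
      (fun k => pathAdj_hasEigenvalue (by omega) k.2) (by simp)
    exact ⟨k + 1, by omega, k.2, rfl⟩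
  · rintro ⟨k, hk, hkm, rfl⟩
    exact pathAdj_hasEigenvalue hk hkm
end

section
/- Let G be a bipartite graph with biadjacency matrix A. For the operators θ_s, θ_t on G^v as above, and for even k ≥ 2, the matrix of the alternating product θ_s θ_t θ_s ⋯ (k factors, ending in θ_s on the right... i.e. the product corresponding to the alternating word of length k with rightmost letter s) equals (AA^T)^{(k−2)/2} · [[AA^T, [2]_v·A],[0,0]], and for odd k ≥ 1 it equals (AA^T)^{(k−1)/2} · [[ [2]_v·I, A],[0,0]]. -/
set_option synthInstance.maxHeartbeats 400000
set_option maxHeartbeats 1000000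

open Matrix

/-- `[2]_v = v + v⁻¹` in the field `ℂ(v)` of rational functions. -/
noncomputable def qtwo : RatFunc ℂ := RatFunc.X + (RatFunc.X)⁻¹

/-- The matrix `[θ_s] = [[ [2]_v·I, A ], [0, 0]]`. -/
noncomputable def thetaS {S T : Type*} [Fintype S] [Fintype T]
    [DecidableEq S] [DecidableEq T] (A : Matrix S T (RatFunc ℂ)) :
    Matrix (S ⊕ T) (S ⊕ T) (RatFunc ℂ) :=
  Matrix.fromBlocks (qtwo • (1 : Matrix S S (RatFunc ℂ))) A 0 0

/-- The matrix `[θ_t] = [[0, 0], [Aᵀ, [2]_v·I]]`. -/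
noncomputable def thetaT {S T : Type*} [Fintype S] [Fintype T]
    [DecidableEq S] [DecidableEq T] (A : Matrix S T (RatFunc ℂ)) :
    Matrix (S ⊕ T) (S ⊕ T) (RatFunc ℂ) :=
  Matrix.fromBlocks 0 0 Aᵀ (qtwo • (1 : Matrix T T (RatFunc ℂ)))

/-- The product of matrices corresponding to the alternating word of length `k`
in `θ_s` and `θ_t` whose rightmost letter (first factor in the product) is
`θ_s`. -/
noncomputable def altProd {S T : Type*} [Fintype S] [Fintype T]
    [DecidableEq S] [DecidableEq T] (A : Matrix S T (RatFunc ℂ)) :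
    ℕ → Matrix (S ⊕ T) (S ⊕ T) (RatFunc ℂ)
  | 0 => 1
  | (n + 1) => altProd A n * (if Even n then thetaS A else thetaT A)

theorem altProd_succ {S T : Type*} [Fintype S] [Fintype T]
    [DecidableEq S] [DecidableEq T] (A : Matrix S T (RatFunc ℂ)) (n : ℕ) :
    altProd A (n + 1) = altProd A n * (if Even n then thetaS A else thetaT A) := by
  rw [altProd]

/-- The alternating products of `[θ_s]` and `[θ_t]` have the stated closed
forms: for even `k = 2m + 2 ≥ 2` the product equals
`(AAᵀ)^{(k−2)/2}·[[AAᵀ, [2]_v·A], [0, 0]]`, and for odd `k = 2m + 1 ≥ 1` it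
equals `(AAᵀ)^{(k−1)/2}·[[ [2]_v·I, A], [0, 0]]`. -/
theorem altProd_closed_form {S T : Type*} [Fintype S] [Fintype T]
    [DecidableEq S] [DecidableEq T] (A : Matrix S T (RatFunc ℂ)) (m : ℕ) :
    altProd A (2 * m + 2)
        = Matrix.fromBlocks ((A * Aᵀ) ^ m * (A * Aᵀ)) ((A * Aᵀ) ^ m * (qtwo • A)) 0 0 ∧
    altProd A (2 * m + 1)
        = Matrix.fromBlocks ((A * Aᵀ) ^ m * (qtwo • (1 : Matrix S S (RatFunc ℂ))))
            ((A * Aᵀ) ^ m * A) 0 0 := by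
  induction m with
  | zero =>
    have h1 : altProd A 1 = thetaS A := by simp [altProd]
    have h2 : altProd A 2 = thetaS A * thetaT A := by
      rw [show (2:ℕ) = 1 + 1 from rfl, altProd_succ, h1]
      simp
    constructor
    · rw [h2]
      simp [thetaS, thetaT, Matrix.fromBlocks_multiply, Matrix.smul_mul,
        Matrix.mul_smul]
    · rw [h1]
      simp [thetaS]
  | succ m ih =>
    obtain ⟨he, ho⟩ := ih
    have hodd : altProd A (2 * (m + 1) + 1)
        = Matrix.fromBlocks ((A * Aᵀ) ^ (m + 1) * (qtwo • (1 : Matrix S S (RatFunc ℂ))))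
            ((A * Aᵀ) ^ (m + 1) * A) 0 0 := by
      have : 2 * (m + 1) + 1 = (2 * m + 2) + 1 := by ring
      rw [this, altProd_succ, if_pos ⟨m + 1, by ring⟩, he]
      simp [thetaS, Matrix.fromBlocks_multiply, Matrix.mul_smul, pow_succ,
        mul_assoc]
    refine ⟨?_, hodd⟩
    have : 2 * (m + 1) + 2 = (2 * (m + 1) + 1) + 1 := by ring
    rw [this, altProd_succ, if_neg (by simp [Nat.even_add_one, parity_simps]), hodd]
    simp [thetaT, Matrix.fromBlocks_multiply, Matrix.mul_smul, Matrix.smul_mul,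
      pow_succ, mul_assoc]
    rw [Matrix.mul_assoc ((A * Aᵀ) ^ m * (A * Aᵀ)) A Aᵀ, Matrix.mul_assoc]
end
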